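/- arXiv:1212.5946 — 2 statements merged into one kernel-verified Lean document; each statement's English description precedes it below -/
import Mathlib

section
/- For a > 1, lim_{b→0⁺} ∫_0^1 √(((1-av)²+b²)/(1-v²)) dv = ∫_0^{1/a} (1-av)/√(1-v²) dv - ∫_{1/a}^1 (1-av)/√(1-v²) dv = π/2 - a + 2√(a²-1) - 2·arcsec(a). -/
/-!
The integrand is dominated by `√((1 - a v)² + 1) / √(1 - v²)`, which is integrable because
`1 / √(1 - v²)` is the derivative of `arcsin`; dominated convergence turns the limit into
`∫₀¹ |1 - a v| / √(1 - v²)`, and the sign change of `1 - a v` at `1/a` splits this into the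
two integrals. These are evaluated with the antiderivative `arcsin v + a √(1 - v²)`, whose value
at `1/a` is `arcsin (1/a) + √(a² - 1) = π/2 - arccos (1/a) + √(a² - 1)`.
-/

open Real Filter Topology Set MeasureTheory intervalIntegral

theorem hasDerivAt_arcsin_add_mul_sqrt_one_sub_sq (a : ℝ) {v : ℝ} (h₁ : -1 < v)
    (h₂ : v < 1) :
    HasDerivAt (fun v => arcsin v + a * √(1 - v ^ 2)) ((1 - a * v) / √(1 - v ^ 2)) v := by
  have hpos : 0 < 1 - v ^ 2 := by nlinarith
  have hsqrt : HasDerivAt (fun v : ℝ => √(1 - v ^ 2)) (-(2 * v) / (2 * √(1 - v ^ 2))) v := by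
    simpa using ((hasDerivAt_pow 2 v).const_sub 1).sqrt hpos.ne'
  refine ((hasDerivAt_arcsin h₁.ne' h₂.ne).fun_add (hsqrt.const_mul a)).congr_deriv ?_
  have := (sqrt_pos.2 hpos).ne'
  field_simp
  ring

theorem intervalIntegrable_one_div_sqrt_one_sub_sq :
    IntervalIntegrable (fun v => 1 / √(1 - v ^ 2)) volume (-1) 1 :=
  intervalIntegrable_deriv_of_nonneg continuous_arcsin.continuousOn
    (fun _ hv => by
      norm_num at hv
      exact hasDerivAt_arcsin (by linarith [hv.1]) (by linarith [hv.2]))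
    (fun _ _ => by positivity)

theorem intervalIntegrable_div_sqrt_one_sub_sq {g : ℝ → ℝ} (hg : Continuous g) {x y : ℝ}
    (hx : x ∈ Icc (-1) 1) (hy : y ∈ Icc (-1) 1) :
    IntervalIntegrable (fun v => g v / √(1 - v ^ 2)) volume x y := by
  simp_rw [div_eq_mul_one_div (g _)]
  refine (intervalIntegrable_one_div_sqrt_one_sub_sq.mono_set ?_).continuousOn_mul
    hg.continuousOn
  rw [uIcc_of_le (by norm_num : (-1 : ℝ) ≤ 1)]
  exact uIcc_subset_Icc hx hy

theorem integral_one_sub_mul_div_sqrt_one_sub_sq (a : ℝ) {x y : ℝ} (hx : -1 ≤ x)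
    (hxy : x ≤ y) (hy : y ≤ 1) :
    ∫ v in x..y, (1 - a * v) / √(1 - v ^ 2) =
      (arcsin y + a * √(1 - y ^ 2)) - (arcsin x + a * √(1 - x ^ 2)) :=
  integral_eq_sub_of_hasDerivAt_of_le hxy (by fun_prop)
    (fun _ hv =>
      hasDerivAt_arcsin_add_mul_sqrt_one_sub_sq a (by linarith [hv.1]) (by linarith [hv.2]))
    (intervalIntegrable_div_sqrt_one_sub_sq (by fun_prop) ⟨hx, hxy.trans hy⟩
      ⟨hx.trans hxy, hy⟩)

theorem integral_abs_eq_sub_of_sign_change {f : ℝ → ℝ} {x c y : ℝ} (hxc : x ≤ c)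
    (hcy : c ≤ y)
    (hf₁ : IntervalIntegrable f volume x c) (hf₂ : IntervalIntegrable f volume c y)
    (hnonneg : ∀ v ∈ Icc x c, 0 ≤ f v) (hnonpos : ∀ v ∈ Icc c y, f v ≤ 0) :
    ∫ v in x..y, |f v| = (∫ v in x..c, f v) - ∫ v in c..y, f v := by
  rw [← integral_add_adjacent_intervals hf₁.abs hf₂.abs, sub_eq_add_neg,
    ← intervalIntegral.integral_neg]
  congr 1
  · refine integral_congr fun v hv => abs_of_nonneg (hnonneg v ?_)
    rwa [uIcc_of_le hxc] at hv
  · refine integral_congr fun v hv => abs_of_nonpos (hnonpos v ?_)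
    rwa [uIcc_of_le hcy] at hv

theorem tendsto_integral_sqrt_add_sq_div_one_sub_sq {g : ℝ → ℝ} (hg : Continuous g)
    {x y : ℝ} (hx : x ∈ Icc (-1) 1) (hy : y ∈ Icc (-1) 1) :
    Tendsto (fun b => ∫ v in x..y, √((g v ^ 2 + b ^ 2) / (1 - v ^ 2))) (𝓝 0)
      (𝓝 (∫ v in x..y, |g v| / √(1 - v ^ 2))) := by
  have hbound : IntervalIntegrable (fun v => √((g v ^ 2 + 1) / (1 - v ^ 2))) volume x y := by
    simp_rw [sqrt_div (add_nonneg (sq_nonneg (g _)) zero_le_one)]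
    exact intervalIntegrable_div_sqrt_one_sub_sq (by fun_prop) hx hy
  refine tendsto_integral_filter_of_dominated_convergence _
    (Eventually.of_forall fun b => (by fun_prop : Measurable _).aestronglyMeasurable) ?_ hbound
    (ae_of_all _ fun v _ => ?_)
  · filter_upwards [Icc_mem_nhds (by norm_num : (-1 : ℝ) < 0) one_pos] with b hb
    refine ae_of_all _ fun v hv => ?_
    have hv' : v ∈ Icc (-1) 1 := uIcc_subset_Icc hx hy (uIoc_subset_uIcc hv)
    rw [norm_of_nonneg (sqrt_nonneg _)]
    refine sqrt_le_sqrt (div_le_div_of_nonneg_right ?_ (by nlinarith [hv'.1, hv'.2]))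
    nlinarith [hb.1, hb.2]
  · have h := (by fun_prop :
      Continuous fun b : ℝ => √((g v ^ 2 + b ^ 2) / (1 - v ^ 2))).tendsto 0
    rwa [zero_pow two_ne_zero, add_zero, sqrt_div (sq_nonneg _), sqrt_sq_eq_abs] at h

theorem upper_half_cone_area_limit (a : ℝ) (ha : 1 < a) :
    Tendsto
      (fun b : ℝ => ∫ v in (0:ℝ)..1,
        Real.sqrt (((1 - a * v) ^ 2 + b ^ 2) / (1 - v ^ 2)))
      (nhdsWithin 0 (Set.Ioi 0))
      (nhds ((∫ v in (0:ℝ)..(1/a), (1 - a * v) / Real.sqrt (1 - v ^ 2)) -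
             ∫ v in (1/a:ℝ)..1, (1 - a * v) / Real.sqrt (1 - v ^ 2))) ∧
    (∫ v in (0:ℝ)..(1/a), (1 - a * v) / Real.sqrt (1 - v ^ 2)) -
        (∫ v in (1/a:ℝ)..1, (1 - a * v) / Real.sqrt (1 - v ^ 2)) =
      π / 2 - a + 2 * Real.sqrt (a ^ 2 - 1) - 2 * Real.arccos (1 / a) := by
  have ha₀ : 0 < a := one_pos.trans ha
  have hc₀ : 0 < 1 / a := by positivity
  have hc₁ : 1 / a < 1 := (div_lt_one ha₀).2 ha
  have hc : 1 / a ∈ Icc (-1) 1 := ⟨by linarith, hc₁.le⟩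
  have hint : ∀ {x y : ℝ}, x ∈ Icc (-1) 1 → y ∈ Icc (-1) 1 →
      IntervalIntegrable (fun v => (1 - a * v) / √(1 - v ^ 2)) volume x y :=
    intervalIntegrable_div_sqrt_one_sub_sq (by fun_prop)
  constructor
  · rw [← integral_abs_eq_sub_of_sign_change hc₀.le hc₁.le
      (hint (by norm_num) hc) (hint hc (by norm_num))
      (fun v hv => div_nonneg (by linarith [(le_div_iff₀' ha₀).1 hv.2]) (sqrt_nonneg _))
      (fun v hv => div_nonpos_of_nonpos_of_nonneg (by linarith [(div_le_iff₀' ha₀).1 hv.1])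
        (sqrt_nonneg _))]
    simp_rw [abs_div, abs_of_nonneg (sqrt_nonneg _)]
    exact (tendsto_integral_sqrt_add_sq_div_one_sub_sq (by fun_prop) (by norm_num)
      (by norm_num)).mono_left nhdsWithin_le_nhds
  · have hsqrt : √(1 - (1 / a) ^ 2) = √(a ^ 2 - 1) / a := by
      rw [show 1 - (1 / a) ^ 2 = (a ^ 2 - 1) / a ^ 2 by field_simp,
        sqrt_div' _ (sq_nonneg a), sqrt_sq ha₀.le]
    rw [integral_one_sub_mul_div_sqrt_one_sub_sq a (by norm_num) hc₀.le hc₁.le,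
      integral_one_sub_mul_div_sqrt_one_sub_sq a (by linarith) hc₁.le le_rfl, hsqrt,
      arcsin_eq_pi_div_two_sub_arccos]
    norm_num [arcsin_one]
    field_simp
    ring
end

section
/- Let g(a) = (-a + 2√(a²-1) + 2·arccsc(a))/(π + a) for a > 1. Then g'(a) = 0 if and only if (π/a)·(a - √(a²-1)) = arcsec(a). -/
/-!
The derivative of the numerator collapses to `2√(a²-1)/a - 1`, because
`2a/√(a²-1) - 2/(a√(a²-1)) = 2√(a²-1)/a`. By the quotient rule `g'(a) = 0` then says
`(2√(a²-1)/a - 1)(π + a) = -a + 2√(a²-1) + 2 arcsin(1/a)`, which, after writing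
`arccos(1/a) = π/2 - arcsin(1/a)`, is twice the stated equation.
-/

open Real

theorem HasDerivAt.deriv_div_eq_zero_iff {f g : ℝ → ℝ} {f' g' a : ℝ}
    (hf : HasDerivAt f f' a) (hg : HasDerivAt g g' a) (hga : g a ≠ 0) :
    _root_.deriv (fun x => f x / g x) a = 0 ↔ f' * g a = f a * g' := by
  rw [(hf.fun_div hg hga).deriv, div_eq_zero_iff, or_iff_left (pow_ne_zero 2 hga), sub_eq_zero]

theorem hasDerivAt_sqrt_sq_sub_one {a : ℝ} (ha : 1 < a ^ 2) :
    HasDerivAt (fun x : ℝ => √(x ^ 2 - 1)) (a / √(a ^ 2 - 1)) a := by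
  have hpos : 0 < a ^ 2 - 1 := by linarith
  have hsq : HasDerivAt (fun x : ℝ => x ^ 2 - 1) (2 * a) a := by
    simpa using (hasDerivAt_pow 2 a).sub_const 1
  refine ((hasDerivAt_sqrt hpos.ne').comp a hsq).congr_deriv ?_
  have : √(a ^ 2 - 1) ≠ 0 := (sqrt_pos.mpr hpos).ne'
  field_simp

theorem hasDerivAt_arcsin_one_div {a : ℝ} (ha : 1 < a) :
    HasDerivAt (fun x : ℝ => arcsin (1 / x)) (-(1 / (a * √(a ^ 2 - 1)))) a := by
  have ha0 : 0 < a := one_pos.trans ha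
  have hinv : HasDerivAt (fun x : ℝ => 1 / x) (-(1 / a ^ 2)) a := by
    simpa using hasDerivAt_inv ha0.ne'
  have hlt : 1 / a < 1 := (div_lt_one ha0).mpr ha
  have hgt : -1 < 1 / a := by linarith [one_div_pos.mpr ha0]
  refine ((hasDerivAt_arcsin hgt.ne' hlt.ne).comp a hinv).congr_deriv ?_
  have hroot : √(1 - (1 / a) ^ 2) = √(a ^ 2 - 1) / a := by
    rw [show 1 - (1 / a) ^ 2 = (a ^ 2 - 1) / a ^ 2 by field_simp, sqrt_div' _ (sq_nonneg a),
      sqrt_sq ha0.le]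
  have hs : √(a ^ 2 - 1) ≠ 0 := (sqrt_pos.mpr (by nlinarith)).ne'
  rw [hroot]
  field_simp

theorem hasDerivAt_total_area_numerator {a : ℝ} (ha : 1 < a) :
    HasDerivAt (fun x : ℝ => -x + 2 * √(x ^ 2 - 1) + 2 * arcsin (1 / x))
      (2 * √(a ^ 2 - 1) / a - 1) a := by
  have hsq : 0 < a ^ 2 - 1 := by nlinarith
  have hs : √(a ^ 2 - 1) ≠ 0 := (sqrt_pos.mpr hsq).ne'
  refine (((hasDerivAt_id a).neg.add ((hasDerivAt_sqrt_sq_sub_one (by linarith)).const_mul 2)).add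
    ((hasDerivAt_arcsin_one_div ha).const_mul 2)).congr_deriv ?_
  have ha0 : a ≠ 0 := by positivity
  field_simp
  linear_combination -2 * sq_sqrt hsq.le

theorem total_ratio_critical_point (a : ℝ) (ha : 1 < a) :
    deriv (fun a : ℝ =>
        (-a + 2 * Real.sqrt (a ^ 2 - 1) + 2 * Real.arcsin (1 / a)) / (π + a)) a = 0 ↔
      (π / a) * (a - Real.sqrt (a ^ 2 - 1)) = Real.arccos (1 / a) := by
  have hden : HasDerivAt (fun x : ℝ => π + x) 1 a := by
    simpa using (hasDerivAt_id a).const_add π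
  rw [(hasDerivAt_total_area_numerator ha).deriv_div_eq_zero_iff hden (by positivity),
    arccos_eq_pi_div_two_sub_arcsin]
  have hdiff :
      (2 * √(a ^ 2 - 1) / a - 1) * (π + a) - (-a + 2 * √(a ^ 2 - 1) + 2 * arcsin (1 / a)) * 1 =
        2 * (π / 2 - arcsin (1 / a) - π / a * (a - √(a ^ 2 - 1))) := by
    field_simp
    ring
  constructor <;> intro h <;> linarith
end
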